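/- arXiv:1809.00739 — 2 statements merged into one kernel-verified Lean document; each statement's English description precedes it below -/
import Mathlib

section
/- Let G be a (P6, diamond)-free graph containing an induced 5-cycle v1v2v3v4v5, with B_{i,i+1} the set of vertices outside the cycle adjacent on the cycle exactly to v_i and v_{i+1}. Then for each i, at least one of B_{i,i+1} and B_{i-1,i} is empty. -/
open SimpleGraph

def diamond : SimpleGraph (Fin 4) := (⊤ : SimpleGraph (Fin 4)).deleteEdges {s(0, 1)}

/-!
Take `a ∈ B i` and `b ∈ B (i - 1)`. The cycle together with `a` and `b` is an induced copy of
one of two explicit graphs on seven vertices, according to whether `a` and `b` are adjacent; the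
seven vertices are automatically distinct because neither graph has two vertices with the same
neighbourhood. If `a ~ b`, then `b, v (i + 1), a, v i` induce a diamond; otherwise
`b, v (i - 1), v (i - 2), v (i + 2), v (i + 1), a` is an induced `P₆`.
-/

namespace SimpleGraph

variable {V W : Type*} {G : SimpleGraph V} {H : SimpleGraph W}

lemma injective_of_adj_iff (hH : ∀ x y, (∀ z, H.Adj x z ↔ H.Adj y z) → x = y) {f : W → V}
    (hf : ∀ x y, G.Adj (f x) (f y) ↔ H.Adj x y) : Function.Injective f :=
  fun x y hxy => hH x y fun z => by rw [← hf, ← hf, hxy]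

def Embedding.ofAdjIff (hH : ∀ x y, (∀ z, H.Adj x z ↔ H.Adj y z) → x = y) (f : W → V)
    (hf : ∀ x y, G.Adj (f x) (f y) ↔ H.Adj x y) : H ↪g G :=
  ⟨⟨f, injective_of_adj_iff hH hf⟩, hf _ _⟩

end SimpleGraph

def attachedAt (i : Fin 5) : Bool → Fin 5
  | false => i
  | true => i - 1

/-- The cycle `inl 0, …, inl 4` with a vertex `inr false` of type `B i` and a vertex `inr true`
of type `B (i - 1)`; `e` records whether these two are adjacent. -/
def c5WithTwoAttached (i : Fin 5) (e : Bool) : SimpleGraph (Fin 5 ⊕ Bool) where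
  Adj
    | .inl j, .inl k => k = j + 1 ∨ j = k + 1
    | .inl j, .inr t | .inr t, .inl j => j = attachedAt i t ∨ j = attachedAt i t + 1
    | .inr s, .inr t => s ≠ t ∧ e
  symm := ⟨by
    rintro (j | s) (k | t) h
    all_goals first | exact h.symm | exact h | exact ⟨h.1.symm, h.2⟩⟩
  loopless := ⟨by
    rintro (j | s) h
    · revert h; decide +revert
    · exact h.1 rfl⟩

instance (i : Fin 5) (e : Bool) : DecidableRel (c5WithTwoAttached i e).Adj
  | .inl j, .inl k => inferInstanceAs (Decidable (k = j + 1 ∨ j = k + 1))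
  | .inl j, .inr t | .inr t, .inl j =>
      inferInstanceAs (Decidable (j = attachedAt i t ∨ j = attachedAt i t + 1))
  | .inr s, .inr t => inferInstanceAs (Decidable (s ≠ t ∧ e))

namespace c5WithTwoAttached

lemma eq_of_forall_adj_iff (i : Fin 5) (e : Bool) : ∀ x y,
    (∀ z, (c5WithTwoAttached i e).Adj x z ↔ (c5WithTwoAttached i e).Adj y z) → x = y := by
  revert i e; decide

def diamondEmbedding (i : Fin 5) : diamond ↪g c5WithTwoAttached i true :=
  ⟨⟨![.inr true, .inl (i + 1), .inr false, .inl i], by revert i; decide⟩,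
    by revert i; unfold diamond; decide⟩

def pathGraphEmbedding (i : Fin 5) : pathGraph 6 ↪g c5WithTwoAttached i false :=
  ⟨⟨![.inr true, .inl (i - 1), .inl (i - 2), .inl (i + 2), .inl (i + 1), .inr false],
    by revert i; decide⟩, by revert i; simp only [pathGraph_adj]; decide⟩

variable {V : Type*} {G : SimpleGraph V} {v : Fin 5 → V} {i : Fin 5} {a b : V} {e : Bool}

lemma adj_iff (hC5 : ∀ j k, G.Adj (v j) (v k) ↔ k = j + 1 ∨ j = k + 1)
    (ha : ∀ j, G.Adj a (v j) ↔ j = i ∨ j = i + 1)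
    (hb : ∀ j, G.Adj b (v j) ↔ j = i - 1 ∨ j = i - 1 + 1) (hab : G.Adj a b ↔ e) :
    ∀ x y, G.Adj (Sum.elim v (fun t => cond t b a) x) (Sum.elim v (fun t => cond t b a) y) ↔
      (c5WithTwoAttached i e).Adj x y := by
  rintro (j | s) (k | t)
  · exact hC5 j k
  · cases t
    · exact (G.adj_comm _ _).trans (ha j)
    · exact (G.adj_comm _ _).trans (hb j)
  · cases s
    · exact ha k
    · exact hb k
  · cases s <;> cases t <;> simp [c5WithTwoAttached, hab, G.adj_comm b a]

def embedding (hC5 : ∀ j k, G.Adj (v j) (v k) ↔ k = j + 1 ∨ j = k + 1)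
    (ha : ∀ j, G.Adj a (v j) ↔ j = i ∨ j = i + 1)
    (hb : ∀ j, G.Adj b (v j) ↔ j = i - 1 ∨ j = i - 1 + 1) (hab : G.Adj a b ↔ e) :
    c5WithTwoAttached i e ↪g G :=
  .ofAdjIff (eq_of_forall_adj_iff i e) _ (adj_iff hC5 ha hb hab)

end c5WithTwoAttached

theorem stmt_5_general {V : Type*} (G : SimpleGraph V)
    (hP6 : ¬ Nonempty (pathGraph 6 ↪g G))
    (hD : ¬ Nonempty (diamond ↪g G))
    (v : Fin 5 → V)
    (hC5 : ∀ i j, G.Adj (v i) (v j) ↔ j = i + 1 ∨ i = j + 1)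
    (B : Fin 5 → Set V)
    (hB : ∀ i, B i = {u | u ∉ Set.range v ∧ ∀ j, G.Adj u (v j) ↔ (j = i ∨ j = i + 1)}) :
    ∀ i, B i = ∅ ∨ B (i - 1) = ∅ := by
  intro i
  by_contra! hne
  obtain ⟨⟨a, ha⟩, ⟨b, hb⟩⟩ := hne
  rw [hB] at ha hb
  have embed (e : Bool) (he : G.Adj a b ↔ e) : c5WithTwoAttached i e ↪g G :=
    c5WithTwoAttached.embedding hC5 ha.2 hb.2 he
  by_cases hab : G.Adj a b
  · exact hD ⟨(embed true (iff_of_true hab rfl)).comp (c5WithTwoAttached.diamondEmbedding i)⟩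
  · exact hP6 ⟨(embed false (iff_of_false hab Bool.false_ne_true)).comp
      (c5WithTwoAttached.pathGraphEmbedding i)⟩

theorem stmt_5 {V : Type*} (G : SimpleGraph V)
    (hP6 : ¬ Nonempty (pathGraph 6 ↪g G))
    (hD : ¬ Nonempty (diamond ↪g G))
    (v : Fin 5 → V) (hv : Function.Injective v)
    (hC5 : ∀ i j, G.Adj (v i) (v j) ↔ j = i + 1 ∨ i = j + 1)
    (B : Fin 5 → Set V)
    (hB : ∀ i, B i = {u | u ∉ Set.range v ∧ ∀ j, G.Adj u (v j) ↔ (j = i ∨ j = i + 1)}) :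
    ∀ i, B i = ∅ ∨ B (i - 1) = ∅ :=
  stmt_5_general G hP6 hD v hC5 B hB
end

section
/- Let G be a diamond-free graph containing an induced 5-cycle v1v2v3v4v5, F_i the vertices outside the cycle adjacent exactly to v_i, v_{i-2}, v_{i+2}, and B_{j,j+1} the vertices adjacent exactly to v_j, v_{j+1}. Then F_i is complete to B_{i+2,i+3} and anti-complete to B_{j,j+1} for every j ≠ i+2 (mod 5). -/
/-!
In a diamond-free graph the common neighbours of an edge form a clique. A vertex of `F i` and a
vertex of `B (i + 2)` are both common neighbours of the edge `v (i + 2) v (i + 3)`, hence adjacent.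
For `j ≠ i + 2`, exactly one endpoint `v k` of the edge `v j v (j + 1)` is a neighbour of
`f ∈ F i`; if `f` were adjacent to `b ∈ B j`, then `f` and the other endpoint `v l` would be common
neighbours of the edge `b v k`, forcing the non-edge `f v l`.
-/

open SimpleGraph

theorem SimpleGraph.isClique_commonNeighbors_of_diamond_free {V : Type*} {G : SimpleGraph V}
    (hD : ¬ Nonempty (diamond ↪g G)) {c d : V} (hcd : G.Adj c d) :
    G.IsClique (G.commonNeighbors c d) := by
  intro a ha b hb hab
  rw [mem_commonNeighbors] at ha hb
  by_contra hnab
  refine hD ⟨⟨⟨![a, b, c, d], fun x y hxy => ?_⟩, fun {x y} => ?_⟩⟩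
  · have := ha.1.ne; have := ha.2.ne; have := hb.1.ne; have := hb.2.ne; have := hcd.ne
    fin_cases x <;> fin_cases y <;> simp_all
  · change G.Adj (![a, b, c, d] x) (![a, b, c, d] y) ↔ _
    fin_cases x <;> fin_cases y <;>
      simp_all [diamond, deleteEdges_adj, G.adj_comm]

theorem Fin.exists_consecutive_split_of_ne_add_two (i j : Fin 5) (h : j ≠ i + 2) :
    ∃ k l : Fin 5, (k = j ∨ k = j + 1) ∧ (l = j ∨ l = j + 1) ∧ (l = k + 1 ∨ k = l + 1) ∧
      (k = i ∨ k = i - 2 ∨ k = i + 2) ∧ ¬(l = i ∨ l = i - 2 ∨ l = i + 2) := by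
  revert i j; decide

theorem stmt_14_general {V : Type*} (G : SimpleGraph V)
    (hD : ¬ Nonempty (diamond ↪g G))
    (v : Fin 5 → V)
    (hC5 : ∀ i j, G.Adj (v i) (v j) ↔ j = i + 1 ∨ i = j + 1)
    (B : Fin 5 → Set V)
    (hB : ∀ i, B i = {u | u ∉ Set.range v ∧ ∀ j, G.Adj u (v j) ↔ (j = i ∨ j = i + 1)})
    (F : Fin 5 → Set V)
    (hF : ∀ i, F i = {u | u ∉ Set.range v ∧ ∀ j, G.Adj u (v j) ↔ (j = i ∨ j = i - 2 ∨ j = i + 2)}) :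
    (∀ i, ∀ f ∈ F i, ∀ b ∈ B (i + 2), G.Adj f b) ∧
      (∀ i j, j ≠ i + 2 → ∀ f ∈ F i, ∀ b ∈ B j, ¬ G.Adj f b) := by
  refine ⟨fun i f hf b hb => ?_, fun i j hj f hf b hb hfb => ?_⟩
  all_goals rw [hF] at hf; rw [hB] at hb
  · have hfb : f ≠ b := by
      rintro rfl
      rcases (hb.2 i).1 ((hf.2 i).2 (Or.inl rfl)) with h | h <;> fin_omega
    have hsucc : i + 2 + 1 = i - 2 := by fin_omega
    refine G.isClique_commonNeighbors_of_diamond_free hD ((hC5 (i + 2) (i + 2 + 1)).2 (Or.inl rfl))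
      ?_ ?_ hfb
    · exact ⟨((hf.2 _).2 (Or.inr (Or.inr rfl))).symm, ((hf.2 _).2 (Or.inr (Or.inl hsucc))).symm⟩
    · exact ⟨((hb.2 _).2 (Or.inl rfl)).symm, ((hb.2 _).2 (Or.inr rfl)).symm⟩
  · obtain ⟨k, l, hk, hl, hkl, hfk, hfl⟩ := Fin.exists_consecutive_split_of_ne_add_two i j hj
    have hfvl : f ≠ v l := fun h => hf.1 ⟨l, h.symm⟩
    refine hfl <| (hf.2 l).1 <| G.isClique_commonNeighbors_of_diamond_free hD ((hb.2 k).2 hk)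
      ?_ ?_ hfvl
    · exact ⟨hfb.symm, ((hf.2 k).2 hfk).symm⟩
    · exact ⟨(hb.2 l).2 hl, (hC5 k l).2 hkl⟩

theorem stmt_14 {V : Type*} (G : SimpleGraph V)
    (hD : ¬ Nonempty (diamond ↪g G))
    (v : Fin 5 → V) (hv : Function.Injective v)
    (hC5 : ∀ i j, G.Adj (v i) (v j) ↔ j = i + 1 ∨ i = j + 1)
    (B : Fin 5 → Set V)
    (hB : ∀ i, B i = {u | u ∉ Set.range v ∧ ∀ j, G.Adj u (v j) ↔ (j = i ∨ j = i + 1)})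
    (F : Fin 5 → Set V)
    (hF : ∀ i, F i = {u | u ∉ Set.range v ∧ ∀ j, G.Adj u (v j) ↔ (j = i ∨ j = i - 2 ∨ j = i + 2)}) :
    (∀ i, ∀ f ∈ F i, ∀ b ∈ B (i + 2), G.Adj f b) ∧
      (∀ i j, j ≠ i + 2 → ∀ f ∈ F i, ∀ b ∈ B j, ¬ G.Adj f b) :=
  stmt_14_general G hD v hC5 B hB F hF
end
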